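/- arXiv:math/0403407 — 3 statements merged into one kernel-verified Lean document; each statement's English description precedes it below -/
import Mathlib

section
/- Let p ≥ 1 and let λ be a partition contained in the p × (p+1) rectangle such that its conjugate equals its complement in p × (p+1), i.e. λ*_i = (p+1) − λ_{p+1−i} for all 1 ≤ i ≤ p (equivalently λ_{p+1−i} + #{j : λ_j ≥ i} = p+1 for all i). Then λ is the staircase partition (p, p−1, …, 2, 1). -/
/-!
For each `i`, the rows of length at least `i + 1` form an initial segment of the rows, so the
hypothesis says it is exactly the first `p + 1 - λ_{p-i}` rows. Asking whether row `p - i` itself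
belongs to that segment, both answers force `λ_{p-i} = i + 1`.
-/

open Finset

theorem Fin.mem_iff_val_lt_card_of_isLowerSet {n : ℕ} {s : Finset (Fin n)}
    (hs : IsLowerSet (s : Set (Fin n))) (j : Fin n) : j ∈ s ↔ (j : ℕ) < #s := by
  constructor
  · intro hj
    have hle := card_le_card (fun k hk => hs (mem_Iic.mp hk) hj : Iic j ⊆ s)
    rw [Fin.card_Iic] at hle
    omega
  · intro hj
    by_contra hjs
    have hle := card_le_card
      (fun k hk => mem_Iio.mpr (lt_of_not_ge fun hjk => hjs (hs hjk hk)) : s ⊆ Iio j)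
    rw [Fin.card_Iio] at hle
    omega

theorem Antitone.le_iff_val_lt_card_filter_le {n : ℕ} {l : Fin n → ℕ} (hl : Antitone l)
    (a : ℕ) (j : Fin n) :
    a ≤ l j ↔ (j : ℕ) < #(univ.filter fun k => a ≤ l k) := by
  have hs : IsLowerSet ((univ.filter fun k => a ≤ l k : Finset (Fin n)) : Set (Fin n)) :=
    fun j k hkj hj => by
      simp only [coe_filter, mem_univ, true_and, Set.mem_ofPred_eq] at hj ⊢
      exact hj.trans (hl hkj)
  simpa using Fin.mem_iff_val_lt_card_of_isLowerSet hs j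

theorem stmt_4_general (p : ℕ) (l : Fin p → ℕ) (hl : Antitone l)
    (h : ∀ i : Fin p,
      l i.rev + (Finset.univ.filter (fun j : Fin p => i.val + 1 ≤ l j)).card = p + 1) :
    ∀ i : Fin p, l i = p - i.val := by
  have hrev : ∀ i : Fin p, l i.rev = i.val + 1 := by
    intro i
    have hmem := hl.le_iff_val_lt_card_filter_le (i.val + 1) i.rev
    have hcard := h i
    rw [Fin.val_rev] at hmem
    omega
  intro i
  have hi := hrev i.rev
  rw [Fin.rev_rev, Fin.val_rev] at hi
  omega

/-- if a partition `λ ⊆ p × (p+1)` satisfies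
`λ_{p+1-i} + #{j : λ_j ≥ i} = p+1` for all `1 ≤ i ≤ p` (i.e. its conjugate equals
its complement in `p × (p+1)`), then `λ` is the staircase `(p, p-1, …, 1)`.
0-indexed: the row index `i : Fin p` represents `i+1`. -/
theorem stmt_4 (p : ℕ) (hp : 1 ≤ p) (l : Fin p → ℕ) (hl : Antitone l)
    (hlq : ∀ i, l i ≤ p + 1)
    (h : ∀ i : Fin p,
      l i.rev + (Finset.univ.filter (fun j : Fin p => i.val + 1 ≤ l j)).card = p + 1) :
    ∀ i : Fin p, l i = p - i.val :=
  stmt_4_general p l hl h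
end

section
/- Let p, q, m be positive integers and let p_1, …, p_m, q_1, …, q_m be positive integers with p_1 + … + p_m ≤ p − 1 and q_1 + … + q_m ≤ q − 1. Then p_1 q_1 + … + p_m q_m ≤ (p − m)(q − m) + (m − 1). -/
/-!
Write `P k = a k + 1` and `Q k = b k + 1` with `a, b ≥ 0`. Then
`∑ P k Q k = ∑ a k b k + A + B + m ≤ A B + A + B + m = (A + 1)(B + 1) + (m - 1)`,
where `A = ∑ a k ≤ p - 1 - m` and `B = ∑ b k ≤ q - 1 - m`; the only inequality used is
`∑ a k b k ≤ (∑ a k)(∑ b k)` for nonnegative terms.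
-/

open Finset

namespace Finset

variable {ι R : Type*} [CommSemiring R] [PartialOrder R] [IsOrderedRing R]

theorem sum_mul_le_sum_mul_sum (s : Finset ι) {f g : ι → R}
    (hf : ∀ i ∈ s, 0 ≤ f i) (hg : ∀ i ∈ s, 0 ≤ g i) :
    ∑ i ∈ s, f i * g i ≤ (∑ i ∈ s, f i) * ∑ i ∈ s, g i := by
  rw [sum_mul]
  exact sum_le_sum fun i hi => mul_le_mul_of_nonneg_left (single_le_sum hg hi) (hf i hi)

theorem sum_add_one_mul_add_one_le (s : Finset ι) {a b : ι → R}
    (ha : ∀ i ∈ s, 0 ≤ a i) (hb : ∀ i ∈ s, 0 ≤ b i) :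
    ∑ i ∈ s, (a i + 1) * (b i + 1) + 1 ≤ ((∑ i ∈ s, a i) + 1) * ((∑ i ∈ s, b i) + 1) + #s := by
  have hexpand : ∑ i ∈ s, (a i + 1) * (b i + 1)
      = ∑ i ∈ s, a i * b i + ∑ i ∈ s, a i + ∑ i ∈ s, b i + #s := by
    simp only [add_mul, mul_add, mul_one, one_mul, sum_add_distrib, sum_const, nsmul_one]
    ring
  calc ∑ i ∈ s, (a i + 1) * (b i + 1) + 1
      = ∑ i ∈ s, a i * b i + ∑ i ∈ s, a i + ∑ i ∈ s, b i + #s + 1 := by rw [hexpand]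
    _ ≤ (∑ i ∈ s, a i) * ∑ i ∈ s, b i + ∑ i ∈ s, a i + ∑ i ∈ s, b i + #s + 1 := by
        gcongr; exact sum_mul_le_sum_mul_sum s ha hb
    _ = ((∑ i ∈ s, a i) + 1) * ((∑ i ∈ s, b i) + 1) + #s := by ring

end Finset

theorem stmt_11_general (p q m : ℕ) (hm : 0 < m)
    (P Q : Fin m → ℕ) (hP : ∀ k, 1 ≤ P k) (hQ : ∀ k, 1 ≤ Q k)
    (hPsum : (∑ k, P k) ≤ p - 1) (hQsum : (∑ k, Q k) ≤ q - 1) :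
    (∑ k, P k * Q k) ≤ (p - m) * (q - m) + (m - 1) := by
  obtain ⟨a, rfl⟩ : ∃ a : Fin m → ℕ, P = fun k => a k + 1 :=
    ⟨fun k => P k - 1, funext fun k => (Nat.sub_add_cancel (hP k)).symm⟩
  obtain ⟨b, rfl⟩ : ∃ b : Fin m → ℕ, Q = fun k => b k + 1 :=
    ⟨fun k => Q k - 1, funext fun k => (Nat.sub_add_cancel (hQ k)).symm⟩
  have hA : (∑ k, a k) + m ≤ p - 1 := by simpa [sum_add_distrib] using hPsum
  have hB : (∑ k, b k) + m ≤ q - 1 := by simpa [sum_add_distrib] using hQsum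
  have key := sum_add_one_mul_add_one_le univ (a := a) (b := b) (by simp) (by simp)
  rw [card_univ, Fintype.card_fin, Nat.cast_id] at key
  have hAB := Nat.mul_le_mul (show (∑ k, a k) + 1 ≤ p - m by omega)
    (show (∑ k, b k) + 1 ≤ q - m by omega)
  show ∑ k, (a k + 1) * (b k + 1) ≤ _
  omega

/-- if `p_1, …, p_m, q_1, …, q_m` are positive integers with
`Σ p_i ≤ p - 1` and `Σ q_i ≤ q - 1`, then
`Σ p_i q_i ≤ (p - m)(q - m) + (m - 1)`. -/
theorem stmt_11 (p q m : ℕ) (hp : 0 < p) (hq : 0 < q) (hm : 0 < m)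
    (P Q : Fin m → ℕ) (hP : ∀ k, 1 ≤ P k) (hQ : ∀ k, 1 ≤ Q k)
    (hPsum : (∑ k, P k) ≤ p - 1) (hQsum : (∑ k, Q k) ≤ q - 1) :
    (∑ k, P k * Q k) ≤ (p - m) * (q - m) + (m - 1) :=
  stmt_11_general p q m hm P Q hP hQ hPsum hQsum
end

section
/- Let p ≥ 1 and let λ be a partition contained in the p × (p+1) rectangle with |λ| = p(p+1)/2. Then the Littlewood–Richardson coefficient c_{λ λ*}^{p×(p+1)} (where p×(p+1) denotes the rectangular partition with p parts equal to p+1) is nonzero if and only if λ is the staircase partition (p, p−1, …, 1), in which case it equals 1. -/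
/-- `c` is a cell of the skew diagram `ν/λ` (0-indexed rows and columns):
row `c.1`, column `c.2` with `λ_{c.1} ≤ c.2 < ν_{c.1}`. -/
def IsSkewCell (lam nu : ℕ → ℕ) (c : ℕ × ℕ) : Prop :=
  lam c.1 ≤ c.2 ∧ c.2 < nu c.1

/-- `T` is a Littlewood–Richardson skew tableau of shape `ν/λ` and content `μ`:
a semistandard filling (letters `0, 1, 2, …` standing for `1, 2, 3, …`),
zero outside the shape, with content `μ`, whose reverse reading word
(rows top to bottom, each row right to left) is a lattice word. -/
def IsLRTableau (lam mu nu : ℕ → ℕ) (T : ℕ × ℕ → ℕ) : Prop :=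
  (∀ c : ℕ × ℕ, ¬ IsSkewCell lam nu c → T c = 0) ∧
  (∀ i j j', lam i ≤ j → j ≤ j' → j' < nu i → T (i, j) ≤ T (i, j')) ∧
  (∀ i j, IsSkewCell lam nu (i, j) → IsSkewCell lam nu (i + 1, j) →
    T (i, j) < T (i + 1, j)) ∧
  (∀ k, {c : ℕ × ℕ | IsSkewCell lam nu c ∧ T c = k}.ncard = mu k) ∧
  (∀ i j k,
    {c : ℕ × ℕ | IsSkewCell lam nu c ∧ (c.1 < i ∨ (c.1 = i ∧ j ≤ c.2)) ∧
        T c = k + 1}.ncard ≤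
    {c : ℕ × ℕ | IsSkewCell lam nu c ∧ (c.1 < i ∨ (c.1 = i ∧ j ≤ c.2)) ∧
        T c = k}.ncard)

/-- The Littlewood–Richardson coefficient `c_{λμ}^{ν}`, defined as the number
of Littlewood–Richardson skew tableaux of shape `ν/λ` and content `μ`. -/
noncomputable def LRCoeff (lam mu nu : ℕ → ℕ) : ℕ :=
  {T : ℕ × ℕ → ℕ | IsLRTableau lam mu nu T}.ncard

/-- The conjugate partition: `λ*_j = #{i : λ_i ≥ j}` (0-indexed: column `j`
has threshold `j + 1`). -/
noncomputable def conjFun (lam : ℕ → ℕ) : ℕ → ℕ :=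
  fun j => {i : ℕ | j + 1 ≤ lam i}.ncard

instance (lam nu : ℕ → ℕ) (c : ℕ × ℕ) : Decidable (IsSkewCell lam nu c) :=
  decidable_of_iff (lam c.1 ≤ c.2 ∧ c.2 < nu c.1) Iff.rfl

def SRect (p : ℕ) : ℕ → ℕ := fun i => if i < p then p + 1 else 0

section Basic
variable {p : ℕ} {lam : ℕ → ℕ}

lemma cj_eq (hlam0 : ∀ i, p ≤ i → lam i = 0) (j : ℕ) :
    conjFun lam j = ((Finset.range p).filter (fun i => j + 1 ≤ lam i)).card := by
  have h : {i : ℕ | j + 1 ≤ lam i} =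
      ↑((Finset.range p).filter (fun i => j + 1 ≤ lam i)) := by
    ext i
    simp only [Set.mem_setOf_eq, Finset.coe_filter, Finset.mem_range, Set.mem_setOf_eq]
    constructor
    · intro h
      refine ⟨?_, h⟩
      by_contra hip
      rw [hlam0 i (le_of_not_gt hip)] at h; omega
    · exact fun h => h.2
  rw [conjFun, h, Set.ncard_coe_finset]

lemma cj_le (hlam0 : ∀ i, p ≤ i → lam i = 0) (j : ℕ) : conjFun lam j ≤ p := by
  rw [cj_eq hlam0 j]
  calc ((Finset.range p).filter (fun i => j + 1 ≤ lam i)).card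
      ≤ (Finset.range p).card := Finset.card_filter_le _ _
    _ = p := Finset.card_range p

lemma galois (hlam : Antitone lam) (hlam0 : ∀ i, p ≤ i → lam i = 0)
    (i j : ℕ) : lam i ≤ j ↔ conjFun lam j ≤ i := by
  rw [cj_eq hlam0 j]
  constructor
  · intro h
    calc ((Finset.range p).filter (fun t => j + 1 ≤ lam t)).card
        ≤ (Finset.range i).card := by
          apply Finset.card_le_card
          intro t ht
          simp only [Finset.mem_filter, Finset.mem_range] at ht ⊢
          by_contra hti
          have := hlam (le_of_not_gt hti)  -- lam t ≤ lam i
          omega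
      _ = i := Finset.card_range i
  · intro h
    by_contra hj
    push_neg at hj
    have hip : i < p := by
      by_contra hip
      rw [hlam0 i (le_of_not_gt hip)] at hj; omega
    have hsub : Finset.range (i + 1) ⊆
        (Finset.range p).filter (fun t => j + 1 ≤ lam t) := by
      intro t ht
      simp only [Finset.mem_range] at ht
      simp only [Finset.mem_filter, Finset.mem_range]
      have := hlam (Nat.lt_succ_iff.mp ht)  -- lam i ≤ lam t
      exact ⟨by omega, by omega⟩
    have := Finset.card_le_card hsub
    rw [Finset.card_range] at this
    omega

lemma cell_iff (c : ℕ × ℕ) :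
    IsSkewCell lam (SRect p) c ↔ c.1 < p ∧ c.2 < p + 1 ∧ lam c.1 ≤ c.2 := by
  unfold IsSkewCell SRect
  by_cases h : c.1 < p <;> simp [h] <;> omega

lemma cells_finite (S : Set (ℕ × ℕ)) (hS : ∀ c ∈ S, IsSkewCell lam (SRect p) c) :
    S.Finite := by
  apply Set.Finite.subset (Finset.finite_toSet (Finset.range p ×ˢ Finset.range (p + 1)))
  intro c hc
  have := (cell_iff c).mp (hS c hc)
  simp [Finset.mem_product, Finset.mem_range]
  omega

lemma set_cells_eq (P : ℕ × ℕ → Prop) [DecidablePred P] :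
    {c : ℕ × ℕ | IsSkewCell lam (SRect p) c ∧ P c} =
      ↑((Finset.range p ×ˢ Finset.range (p + 1)).filter
        (fun c => IsSkewCell lam (SRect p) c ∧ P c)) := by
  ext c
  simp only [Set.mem_setOf_eq, Finset.coe_filter, Finset.mem_product, Finset.mem_range,
    Set.mem_setOf_eq]
  constructor
  · intro h
    have := (cell_iff c).mp h.1
    exact ⟨⟨this.1, this.2.1⟩, h⟩
  · exact fun h => h.2

lemma ncard_cells (P : ℕ × ℕ → Prop) [DecidablePred P] :
    {c : ℕ × ℕ | IsSkewCell lam (SRect p) c ∧ P c}.ncard =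
      ((Finset.range p ×ˢ Finset.range (p + 1)).filter
        (fun c => IsSkewCell lam (SRect p) c ∧ P c)).card := by
  rw [set_cells_eq, Set.ncard_coe_finset]

end Basic


section ColLB
variable {p : ℕ} {lam mu : ℕ → ℕ} {T : ℕ × ℕ → ℕ}

lemma col_lb (hlam : Antitone lam) (hlam0 : ∀ i, p ≤ i → lam i = 0)
    (hT : IsLRTableau lam mu (SRect p) T) :
    ∀ i j, IsSkewCell lam (SRect p) (i, j) → i ≤ conjFun lam j + T (i, j) := by
  intro i
  induction i with
  | zero => intro j _; omega
  | succ n ih =>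
    intro j hc
    rcases Nat.lt_or_ge n (conjFun lam j) with h | h
    · omega
    · -- cell (n, j)
      have hcell := (cell_iff (p := p) (n + 1, j)).mp hc
      have hnc : IsSkewCell lam (SRect p) (n, j) := by
        rw [cell_iff]
        refine ⟨by omega, hcell.2.1, ?_⟩
        exact (galois hlam hlam0 n j).mpr h
      have h1 := ih j hnc
      have h2 := hT.2.2.1 n j hnc hc
      omega

end ColLB

section Staircase
variable {p : ℕ} {lam mu : ℕ → ℕ} {T : ℕ × ℕ → ℕ}

lemma cj_staircase (hst : ∀ i < p, lam i = p - i) (hlam0 : ∀ i, p ≤ i → lam i = 0)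
    (j : ℕ) : conjFun lam j = p - j := by
  rw [cj_eq hlam0 j]
  have h : (Finset.range p).filter (fun i => j + 1 ≤ lam i) = Finset.range (p - j) := by
    ext i
    simp only [Finset.mem_filter, Finset.mem_range]
    constructor
    · rintro ⟨h1, h2⟩
      rw [hst i h1] at h2; omega
    · intro h
      have h1 : i < p := by omega
      rw [hst i h1]
      exact ⟨h1, by omega⟩
  rw [h, Finset.card_range]

def stairT (p : ℕ) (lam : ℕ → ℕ) : ℕ × ℕ → ℕ :=
  fun c => if IsSkewCell lam (SRect p) c then c.1 + c.2 - p else 0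

lemma diag_set_eq (hst : ∀ i < p, lam i = p - i) (k : ℕ) :
    {c : ℕ × ℕ | IsSkewCell lam (SRect p) c ∧ c.1 + c.2 - p = k} =
      (fun i => (i, p - i + k)) '' Set.Ico k p := by
  ext ⟨i, j⟩
  simp only [Set.mem_setOf_eq, Set.mem_image, Set.mem_Ico, cell_iff]
  constructor
  · rintro ⟨⟨h1, h2, h3⟩, h4⟩
    rw [hst i h1] at h3
    exact ⟨i, ⟨by omega, h1⟩, by simp only [Prod.mk.injEq]; exact ⟨trivial, by omega⟩⟩
  · rintro ⟨a, ⟨ha1, ha2⟩, heq⟩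
    simp only [Prod.mk.injEq] at heq
    obtain ⟨rfl, rfl⟩ := heq
    rw [hst a ha2]
    omega

lemma ncard_diag (hst : ∀ i < p, lam i = p - i) (k : ℕ) :
    {c : ℕ × ℕ | IsSkewCell lam (SRect p) c ∧ c.1 + c.2 - p = k}.ncard = p - k := by
  rw [diag_set_eq hst k, Set.ncard_image_of_injOn, ← Finset.coe_Ico,
    Set.ncard_coe_finset, Nat.card_Ico]
  intro a _ b _ h
  exact (Prod.mk.injEq _ _ _ _).mp h |>.1

lemma stairT_cell (hst : ∀ i < p, lam i = p - i) {c : ℕ × ℕ}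
    (hc : IsSkewCell lam (SRect p) c) :
    stairT p lam c = c.1 + c.2 - p ∧ p ≤ c.1 + c.2 ∧ c.1 < p ∧ c.2 ≤ p ∧ p - c.1 ≤ c.2 := by
  have h := (cell_iff c).mp hc
  have := hst c.1 h.1
  refine ⟨if_pos hc, by omega, h.1, by omega, by omega⟩

lemma stairT_isLR (hst : ∀ i < p, lam i = p - i) (hlam0 : ∀ i, p ≤ i → lam i = 0) :
    IsLRTableau lam (conjFun lam) (SRect p) (stairT p lam) := by
  refine ⟨fun c hc => if_neg hc, ?_, ?_, ?_, ?_⟩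
  · -- rows weakly increasing
    intro i j j' h1 h2 h3
    have hc' : IsSkewCell lam (SRect p) (i, j') := ⟨le_trans h1 h2, h3⟩
    have hh := (cell_iff (i, j')).mp hc'
    have hc : IsSkewCell lam (SRect p) (i, j) :=
      (cell_iff (i, j)).mpr ⟨hh.1, by have := hh.2.1; simp only at this ⊢; omega, h1⟩
    have a := stairT_cell hst hc
    have b := stairT_cell hst hc'
    simp only at a b
    rw [a.1, b.1]
    omega
  · -- columns strictly increasing
    intro i j hc hc'
    have a := stairT_cell hst hc
    have b := stairT_cell hst hc'
    simp only at a b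
    omega
  · -- content
    intro k
    have hset : {c : ℕ × ℕ | IsSkewCell lam (SRect p) c ∧ stairT p lam c = k} =
        {c : ℕ × ℕ | IsSkewCell lam (SRect p) c ∧ c.1 + c.2 - p = k} := by
      ext c
      simp only [Set.mem_setOf_eq]
      constructor
      · rintro ⟨hc, hk⟩; exact ⟨hc, by rw [← (stairT_cell hst hc).1]; exact hk⟩
      · rintro ⟨hc, hk⟩; exact ⟨hc, by rw [(stairT_cell hst hc).1]; exact hk⟩
    rw [hset, ncard_diag hst, cj_staircase hst hlam0]
  · -- lattice
    intro i j k
    refine Set.ncard_le_ncard_of_injOn (fun c => (c.1 - 1, c.2)) ?_ ?_ ?_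
    · rintro ⟨a, b⟩ ⟨hc, hpre, hval⟩
      have h := stairT_cell hst hc
      simp only at h
      have ha : 1 ≤ a := by omega
      have hcell' : IsSkewCell lam (SRect p) (a - 1, b) := by
        rw [cell_iff]
        simp only
        rw [hst (a-1) (by omega)]
        omega
      refine ⟨hcell', ?_, ?_⟩
      · simp only at hpre ⊢
        omega
      · rw [(stairT_cell hst hcell').1]
        simp only
        omega
    · rintro ⟨a, b⟩ ⟨hc, _, hval⟩ ⟨a', b'⟩ ⟨hc', _, hval'⟩ heq
      have h := stairT_cell hst hc
      have h' := stairT_cell hst hc'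
      simp only [Prod.mk.injEq] at heq ⊢
      simp only at h h'
      omega
    · exact cells_finite _ (fun c hc => hc.1)

lemma stair_T_eq (hlam : Antitone lam) (hlam0 : ∀ i, p ≤ i → lam i = 0)
    (hst : ∀ i < p, lam i = p - i)
    (hT : IsLRTableau lam (conjFun lam) (SRect p) T) : T = stairT p lam := by
  have key : ∀ k : ℕ, {c : ℕ × ℕ | IsSkewCell lam (SRect p) c ∧ T c = k} =
      {c : ℕ × ℕ | IsSkewCell lam (SRect p) c ∧ c.1 + c.2 - p = k} := by
    intro k
    induction k using Nat.strong_induction_on with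
    | _ k ih =>
      have hsub : {c : ℕ × ℕ | IsSkewCell lam (SRect p) c ∧ T c = k} ⊆
          {c : ℕ × ℕ | IsSkewCell lam (SRect p) c ∧ c.1 + c.2 - p = k} := by
        rintro c ⟨hc, hTc⟩
        have hcf := (cell_iff c).mp hc
        have hlb : c.1 ≤ conjFun lam c.2 + T c := col_lb hlam hlam0 hT c.1 c.2 hc
        rw [cj_staircase hst hlam0] at hlb
        refine ⟨hc, ?_⟩
        have hd : c.1 + c.2 - p ≤ k := by omega
        rcases eq_or_lt_of_le hd with heq | hlt
        · exact heq
        · exfalso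
          have hmem : c ∈ {x : ℕ × ℕ | IsSkewCell lam (SRect p) x ∧
              x.1 + x.2 - p = c.1 + c.2 - p} := ⟨hc, rfl⟩
          rw [← ih _ hlt] at hmem
          have := hmem.2
          omega
      refine Set.eq_of_subset_of_ncard_le hsub ?_ ?_
      · rw [ncard_diag hst, hT.2.2.2.1 k, cj_staircase hst hlam0]
      · exact cells_finite _ (fun c hc => hc.1)
  funext c
  by_cases hc : IsSkewCell lam (SRect p) c
  · have hmem : c ∈ {x : ℕ × ℕ | IsSkewCell lam (SRect p) x ∧
        x.1 + x.2 - p = c.1 + c.2 - p} := ⟨hc, rfl⟩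
    rw [← key _] at hmem
    rw [hmem.2, stairT, if_pos hc]
  · rw [hT.1 c hc, stairT, if_neg hc]

lemma stair_coeff (hlam : Antitone lam) (hlam0 : ∀ i, p ≤ i → lam i = 0)
    (hst : ∀ i < p, lam i = p - i) :
    {T : ℕ × ℕ → ℕ | IsLRTableau lam (conjFun lam) (SRect p) T}.ncard = 1 := by
  have h : {T : ℕ × ℕ → ℕ | IsLRTableau lam (conjFun lam) (SRect p) T} =
      {stairT p lam} := by
    apply Set.eq_singleton_iff_unique_mem.mpr
    exact ⟨stairT_isLR hst hlam0, fun T hT => stair_T_eq hlam hlam0 hst hT⟩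
  rw [h, Set.ncard_singleton]

end Staircase

section Part1
variable {p : ℕ} {lam : ℕ → ℕ} {T : ℕ × ℕ → ℕ}

def MF (p : ℕ) (lam : ℕ → ℕ) (T : ℕ × ℕ → ℕ) (k i : ℕ) : Finset (ℕ × ℕ) :=
  (Finset.range p ×ˢ Finset.range (p + 1)).filter
    (fun c => IsSkewCell lam (SRect p) c ∧ c.1 < i ∧ T c = k)

noncomputable def ColF (p : ℕ) (lam : ℕ → ℕ) (m : ℕ) : ℕ :=
  ((Finset.range (p + 1)).filter (fun j => conjFun lam j < m)).card

def PF (p : ℕ) (lam : ℕ → ℕ) (T : ℕ × ℕ → ℕ) (i j k : ℕ) : Finset (ℕ × ℕ) :=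
  (Finset.range p ×ˢ Finset.range (p + 1)).filter
    (fun c => IsSkewCell lam (SRect p) c ∧ (c.1 < i ∨ (c.1 = i ∧ j ≤ c.2)) ∧ T c = k)

lemma lat_PF (hT : IsLRTableau lam (conjFun lam) (SRect p) T) (i j k : ℕ) :
    (PF p lam T i j (k + 1)).card ≤ (PF p lam T i j k).card := by
  have h := hT.2.2.2.2 i j k
  rwa [ncard_cells (fun c => (c.1 < i ∨ (c.1 = i ∧ j ≤ c.2)) ∧ T c = k + 1),
    ncard_cells (fun c => (c.1 < i ∨ (c.1 = i ∧ j ≤ c.2)) ∧ T c = k)] at h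

lemma MF_step (hT : IsLRTableau lam (conjFun lam) (SRect p) T) (k i : ℕ) :
    (MF p lam T (k + 1) (i + 1)).card ≤ (MF p lam T k i).card := by
  by_cases hex : ∃ j, IsSkewCell lam (SRect p) (i, j) ∧ T (i, j) = k + 1
  · set j0 := Nat.find hex with hj0def
    have hj0 := Nat.find_spec hex
    have h1 : MF p lam T (k + 1) (i + 1) ⊆ PF p lam T i j0 (k + 1) := by
      rintro ⟨a, b⟩ hc
      simp only [MF, PF, Finset.mem_filter] at hc ⊢
      obtain ⟨hmem, hcell, hlt, hval⟩ := hc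
      refine ⟨hmem, hcell, ?_, hval⟩
      rcases Nat.lt_or_ge a i with h | h
      · exact Or.inl h
      · have ha : a = i := by omega
        subst ha
        exact Or.inr ⟨rfl, Nat.find_min' hex ⟨hcell, hval⟩⟩
    have h2 : PF p lam T i j0 k ⊆ MF p lam T k i := by
      rintro ⟨a, b⟩ hc
      simp only [MF, PF, Finset.mem_filter] at hc ⊢
      obtain ⟨hmem, hcell, hpre, hval⟩ := hc
      refine ⟨hmem, hcell, ?_, hval⟩
      rcases hpre with h | ⟨rfl, hj0b⟩
      · exact h
      · exfalso
        have hrow := hT.2.1 a j0 b hj0.1.1 hj0b hcell.2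
        rw [hval, hj0.2] at hrow
        omega
    calc (MF p lam T (k + 1) (i + 1)).card
        ≤ (PF p lam T i j0 (k + 1)).card := Finset.card_le_card h1
      _ ≤ (PF p lam T i j0 k).card := lat_PF hT i j0 k
      _ ≤ (MF p lam T k i).card := Finset.card_le_card h2
  · push_neg at hex
    have h1 : MF p lam T (k + 1) (i + 1) ⊆ PF p lam T i (p + 1) (k + 1) := by
      rintro ⟨a, b⟩ hc
      simp only [MF, PF, Finset.mem_filter] at hc ⊢
      obtain ⟨hmem, hcell, hlt, hval⟩ := hc
      refine ⟨hmem, hcell, ?_, hval⟩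
      left
      rcases Nat.lt_or_ge a i with h | h
      · exact h
      · exfalso
        have ha : a = i := by omega
        subst ha
        exact hex b hcell hval
    have h2 : PF p lam T i (p + 1) k ⊆ MF p lam T k i := by
      rintro ⟨a, b⟩ hc
      simp only [MF, PF, Finset.mem_filter] at hc ⊢
      obtain ⟨hmem, hcell, hpre, hval⟩ := hc
      refine ⟨hmem, hcell, ?_, hval⟩
      rcases hpre with h | ⟨rfl, hb⟩
      · exact h
      · exfalso
        have := (cell_iff (a, b)).mp hcell
        simp only at this
        omega
    calc (MF p lam T (k + 1) (i + 1)).card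
        ≤ (PF p lam T i (p + 1) (k + 1)).card := Finset.card_le_card h1
      _ ≤ (PF p lam T i (p + 1) k).card := lat_PF hT i (p + 1) k
      _ ≤ (MF p lam T k i).card := Finset.card_le_card h2

lemma M0_le (hlam : Antitone lam) (hlam0 : ∀ i, p ≤ i → lam i = 0)
    (hT : IsLRTableau lam (conjFun lam) (SRect p) T) (i : ℕ) :
    (MF p lam T 0 i).card ≤ ColF p lam i := by
  apply Finset.card_le_card_of_injOn (fun c => c.2)
  · rintro ⟨a, b⟩ hc
    simp only [Finset.mem_coe, MF, Finset.mem_filter, Finset.mem_product, Finset.mem_range] at hc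
    obtain ⟨⟨hap, hbp⟩, hcell, hai, hval⟩ := hc
    have hub := col_lb hlam hlam0 hT a b hcell
    have hlb := (galois hlam hlam0 a b).mp hcell.1
    rw [hval] at hub
    simp only [Finset.mem_coe, ColF, Finset.mem_filter, Finset.mem_range]
    exact ⟨hbp, by omega⟩
  · rintro ⟨a, b⟩ ha ⟨a', b'⟩ ha' heq
    simp only [Finset.coe_filter, Set.mem_setOf_eq, MF, Finset.mem_filter] at ha ha'
    obtain ⟨_, hcell, _, hval⟩ := ha
    obtain ⟨_, hcell', _, hval'⟩ := ha'
    simp only at heq hval hval'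
    have e1 := col_lb hlam hlam0 hT a b hcell
    have e2 := (galois hlam hlam0 a b).mp hcell.1
    have e3 := col_lb hlam hlam0 hT a' b' hcell'
    have e4 := (galois hlam hlam0 a' b').mp hcell'.1
    rw [hval] at e1
    rw [hval'] at e3
    simp only [Prod.mk.injEq]
    subst heq
    exact ⟨by omega, rfl⟩

lemma M_le_Col (hlam : Antitone lam) (hlam0 : ∀ i, p ≤ i → lam i = 0)
    (hT : IsLRTableau lam (conjFun lam) (SRect p) T) :
    ∀ k i, (MF p lam T k i).card ≤ ColF p lam (i - k) := by
  intro k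
  induction k with
  | zero => intro i; simpa using M0_le hlam hlam0 hT i
  | succ k ih =>
    intro i
    cases i with
    | zero =>
      have h : MF p lam T (k + 1) 0 = ∅ := by
        ext c
        simp [MF]
      simp [h]
    | succ n =>
      calc (MF p lam T (k + 1) (n + 1)).card
          ≤ (MF p lam T k n).card := MF_step hT k n
        _ ≤ ColF p lam (n - k) := ih n
        _ = ColF p lam (n + 1 - (k + 1)) := by rw [Nat.succ_sub_succ]

def cellsF (p : ℕ) (lam : ℕ → ℕ) : Finset (ℕ × ℕ) :=
  (Finset.range p ×ˢ Finset.range (p + 1)).filter (fun c => IsSkewCell lam (SRect p) c)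

lemma ColF_zero : ColF p lam 0 = 0 := by
  simp [ColF]

lemma T_lt_p (hlam : Antitone lam) (hlam0 : ∀ i, p ≤ i → lam i = 0)
    (hT : IsLRTableau lam (conjFun lam) (SRect p) T) :
    ∀ c ∈ cellsF p lam, T c < p := by
  rintro ⟨a, b⟩ hc
  simp only [cellsF, Finset.mem_filter] at hc
  by_contra hge
  push_neg at hge
  have hmem : (a, b) ∈ MF p lam T (T (a, b)) p := by
    simp only [MF, Finset.mem_filter]
    have := (cell_iff (a, b)).mp hc.2
    exact ⟨hc.1, hc.2, this.1, trivial⟩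
  have h1 : 1 ≤ (MF p lam T (T (a, b)) p).card := Finset.card_pos.mpr ⟨_, hmem⟩
  have h2 := M_le_Col hlam hlam0 hT (T (a, b)) p
  have h3 : p - T (a, b) = 0 := by omega
  rw [h3, ColF_zero] at h2
  omega

lemma cells_card_eq_sum_MF (hlam : Antitone lam) (hlam0 : ∀ i, p ≤ i → lam i = 0)
    (hT : IsLRTableau lam (conjFun lam) (SRect p) T) :
    (cellsF p lam).card = ∑ k ∈ Finset.range p, (MF p lam T k p).card := by
  have h := Finset.card_eq_sum_card_fiberwise (f := T) (s := cellsF p lam)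
    (t := Finset.range p) (fun c hc => Finset.mem_range.mpr (T_lt_p hlam hlam0 hT c hc))
  rw [h]
  apply Finset.sum_congr rfl
  intro k _
  congr 1
  ext c
  simp only [cellsF, MF, Finset.mem_filter]
  constructor
  · rintro ⟨⟨hm, hcell⟩, hval⟩
    exact ⟨hm, hcell, ((cell_iff c).mp hcell).1, hval⟩
  · rintro ⟨hm, hcell, _, hval⟩
    exact ⟨⟨hm, hcell⟩, hval⟩

lemma cells_card (hlamb : ∀ i, lam i ≤ p + 1) :
    (cellsF p lam).card = ∑ i ∈ Finset.range p, (p + 1 - lam i) := by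
  rw [cellsF, Finset.card_filter, Finset.sum_product]
  apply Finset.sum_congr rfl
  intro i hi
  rw [Finset.mem_range] at hi
  have h : ∀ j ∈ Finset.range (p + 1),
      (if IsSkewCell lam (SRect p) (i, j) then 1 else 0) = if lam i ≤ j then 1 else 0 := by
    intro j hj
    rw [Finset.mem_range] at hj
    congr 1
    rw [cell_iff]
    simp only [eq_iff_iff]
    constructor
    · exact fun h => h.2.2
    · exact fun h => ⟨hi, hj, h⟩
  rw [Finset.sum_congr rfl h, ← Finset.card_filter]
  have : (Finset.range (p + 1)).filter (fun j => lam i ≤ j) = Finset.Ico (lam i) (p + 1) := by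
    ext j
    simp only [Finset.mem_filter, Finset.mem_range, Finset.mem_Ico]
    omega
  rw [this, Nat.card_Ico]

lemma sum_cj (hlamb : ∀ i, lam i ≤ p + 1) (hlam0 : ∀ i, p ≤ i → lam i = 0) :
    ∑ j ∈ Finset.range (p + 1), conjFun lam j = ∑ i ∈ Finset.range p, lam i := by
  have h : ∀ j ∈ Finset.range (p + 1), conjFun lam j =
      ∑ i ∈ Finset.range p, if j + 1 ≤ lam i then 1 else 0 := by
    intro j _
    rw [cj_eq hlam0 j, Finset.card_filter]
  rw [Finset.sum_congr rfl h, Finset.sum_comm]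
  apply Finset.sum_congr rfl
  intro i _
  rw [← Finset.card_filter]
  have : (Finset.range (p + 1)).filter (fun j => j + 1 ≤ lam i) = Finset.range (lam i) := by
    ext j
    simp only [Finset.mem_filter, Finset.mem_range]
    have := hlamb i
    omega
  rw [this, Finset.card_range]

lemma sum_ColF (hlam0 : ∀ i, p ≤ i → lam i = 0) :
    ∑ k ∈ Finset.range p, ColF p lam (p - k) =
      ∑ j ∈ Finset.range (p + 1), (p - conjFun lam j) := by
  have h : ∀ k ∈ Finset.range p, ColF p lam (p - k) =
      ∑ j ∈ Finset.range (p + 1), if conjFun lam j < p - k then 1 else 0 := by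
    intro k _
    rw [ColF, Finset.card_filter]
  rw [Finset.sum_congr rfl h, Finset.sum_comm]
  apply Finset.sum_congr rfl
  intro j _
  rw [← Finset.card_filter]
  have : (Finset.range p).filter (fun k => conjFun lam j < p - k) =
      Finset.range (p - conjFun lam j) := by
    ext k
    simp only [Finset.mem_filter, Finset.mem_range]
    omega
  rw [this, Finset.card_range]

lemma sum_MF_eq_sum_ColF (hlam : Antitone lam) (hlam0 : ∀ i, p ≤ i → lam i = 0)
    (hlamb : ∀ i, lam i ≤ p + 1)
    (hT : IsLRTableau lam (conjFun lam) (SRect p) T) :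
    ∑ k ∈ Finset.range p, (MF p lam T k p).card = ∑ k ∈ Finset.range p, ColF p lam (p - k) := by
  rw [← cells_card_eq_sum_MF hlam hlam0 hT, cells_card hlamb, sum_ColF hlam0]
  have h1 : ∑ i ∈ Finset.range p, (p + 1 - lam i) + ∑ i ∈ Finset.range p, lam i
      = p * (p + 1) := by
    rw [← Finset.sum_add_distrib]
    have : ∀ i ∈ Finset.range p, (p + 1 - lam i) + lam i = p + 1 := by
      intro i _
      have := hlamb i
      omega
    rw [Finset.sum_congr rfl this, Finset.sum_const, Finset.card_range, smul_eq_mul]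
  have h2 : ∑ j ∈ Finset.range (p + 1), (p - conjFun lam j)
      + ∑ j ∈ Finset.range (p + 1), conjFun lam j = p * (p + 1) := by
    rw [← Finset.sum_add_distrib]
    have : ∀ j ∈ Finset.range (p + 1), (p - conjFun lam j) + conjFun lam j = p := by
      intro j _
      have := cj_le hlam0 j
      omega
    rw [Finset.sum_congr rfl this, Finset.sum_const, Finset.card_range, smul_eq_mul]
    ring
  have h3 := sum_cj hlamb hlam0
  omega

lemma MF_eq_ColF (hlam : Antitone lam) (hlam0 : ∀ i, p ≤ i → lam i = 0)
    (hlamb : ∀ i, lam i ≤ p + 1)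
    (hT : IsLRTableau lam (conjFun lam) (SRect p) T) :
    ∀ k ∈ Finset.range p, (MF p lam T k p).card = ColF p lam (p - k) := by
  have hle : ∀ k ∈ Finset.range p, (MF p lam T k p).card ≤ ColF p lam (p - k) :=
    fun k _ => M_le_Col hlam hlam0 hT k p
  exact (Finset.sum_eq_sum_iff_of_le hle).mp (sum_MF_eq_sum_ColF hlam hlam0 hlamb hT)

lemma content_eq_ColF (hlam : Antitone lam) (hlam0 : ∀ i, p ≤ i → lam i = 0)
    (hlamb : ∀ i, lam i ≤ p + 1)
    (hT : IsLRTableau lam (conjFun lam) (SRect p) T) :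
    ∀ k < p, conjFun lam k = ColF p lam (p - k) := by
  intro k hk
  have hcont := hT.2.2.2.1 k
  rw [ncard_cells (fun c => T c = k)] at hcont
  have hset : (Finset.range p ×ˢ Finset.range (p + 1)).filter
      (fun c => IsSkewCell lam (SRect p) c ∧ T c = k) = MF p lam T k p := by
    ext c
    simp only [MF, Finset.mem_filter]
    constructor
    · rintro ⟨hm, hcell, hval⟩
      exact ⟨hm, hcell, ((cell_iff c).mp hcell).1, hval⟩
    · rintro ⟨hm, hcell, _, hval⟩
      exact ⟨hm, hcell, hval⟩
  rw [hset] at hcont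
  rw [← hcont, MF_eq_ColF hlam hlam0 hlamb hT k (Finset.mem_range.mpr hk)]

lemma ColF_formula (hlam : Antitone lam) (hlam0 : ∀ i, p ≤ i → lam i = 0)
    (hlamb : ∀ i, lam i ≤ p + 1) (k : ℕ) (hk : k < p) :
    ColF p lam (p - k) = p + 1 - lam (p - 1 - k) := by
  rw [ColF]
  have h : (Finset.range (p + 1)).filter (fun j => conjFun lam j < p - k) =
      Finset.Ico (lam (p - 1 - k)) (p + 1) := by
    ext j
    simp only [Finset.mem_filter, Finset.mem_range, Finset.mem_Ico]
    have hg := galois hlam hlam0 (p - 1 - k) j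
    have hpk : p - k - 1 = p - 1 - k := by omega
    constructor
    · rintro ⟨hj, hlt⟩
      refine ⟨?_, hj⟩
      apply hg.mpr
      omega
    · rintro ⟨hj, hjp⟩
      refine ⟨hjp, ?_⟩
      have := hg.mp hj
      omega
  rw [h, Nat.card_Ico]

lemma staircase_of_LR (hp : 1 ≤ p) (hlam : Antitone lam)
    (hlam0 : ∀ i, p ≤ i → lam i = 0) (hlamb : ∀ i, lam i ≤ p + 1)
    (hsum : 2 * ∑ i ∈ Finset.range p, lam i = p * (p + 1))
    (hT : IsLRTableau lam (conjFun lam) (SRect p) T) :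
    ∀ i < p, lam i = p - i := by
  have hrel : ∀ k < p, conjFun lam k + lam (p - 1 - k) = p + 1 := by
    intro k hk
    have h1 := content_eq_ColF hlam hlam0 hlamb hT k hk
    have h2 := ColF_formula hlam hlam0 hlamb k hk
    have h3 := hlamb (p - 1 - k)
    omega
  have hge : ∀ i < p, p - i ≤ lam i := by
    intro i hi
    by_contra hlt
    push_neg at hlt
    have hli : lam i ≤ p - 1 - i := by omega
    have hcj : conjFun lam (p - 1 - i) ≤ i := (galois hlam hlam0 i (p - 1 - i)).mp hli
    have hr := hrel (p - 1 - i) (by omega)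
    have he : p - 1 - (p - 1 - i) = i := by omega
    rw [he] at hr
    omega
  -- sums
  have hgauss : ∀ n : ℕ, 2 * ∑ i ∈ Finset.range n, (n - i) = n * (n + 1) := by
    intro n
    induction n with
    | zero => simp
    | succ m ih =>
      rw [Finset.sum_range_succ]
      have h : ∑ i ∈ Finset.range m, (m + 1 - i) = ∑ i ∈ Finset.range m, ((m - i) + 1) := by
        apply Finset.sum_congr rfl
        intro i hi
        rw [Finset.mem_range] at hi
        omega
      rw [h, Finset.sum_add_distrib, Finset.sum_const, Finset.card_range, smul_eq_mul,
        mul_one, Nat.add_sub_cancel_left]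
      nlinarith [ih]
  have hsums : ∑ i ∈ Finset.range p, (p - i) = ∑ i ∈ Finset.range p, lam i := by
    have h := (hgauss p).trans hsum.symm
    omega
  have := (Finset.sum_eq_sum_iff_of_le (fun i hi =>
    hge i (Finset.mem_range.mp hi))).mp hsums
  intro i hi
  exact (this i (Finset.mem_range.mpr hi)).symm

end Part1

/-- for a partition `λ ⊆ p × (p+1)` with `|λ| = p(p+1)/2`, the
Littlewood–Richardson coefficient `c_{λ λ*}^{p×(p+1)}` is nonzero iff `λ` is
the staircase `(p, p-1, …, 1)`, in which case it equals `1`. -/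
theorem stmt_15 (p : ℕ) (hp : 1 ≤ p) (lam : ℕ → ℕ) (hlam : Antitone lam)
    (hlam0 : ∀ i, p ≤ i → lam i = 0) (hlamb : ∀ i, lam i ≤ p + 1)
    (hsum : 2 * ∑ i ∈ Finset.range p, lam i = p * (p + 1)) :
    (LRCoeff lam (conjFun lam) (fun i => if i < p then p + 1 else 0) ≠ 0
      ↔ ∀ i < p, lam i = p - i) ∧
    ((∀ i < p, lam i = p - i) →
      LRCoeff lam (conjFun lam) (fun i => if i < p then p + 1 else 0) = 1) := by
  have hstair : (∀ i < p, lam i = p - i) →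
      LRCoeff lam (conjFun lam) (fun i => if i < p then p + 1 else 0) = 1 := by
    intro hst
    show LRCoeff lam (conjFun lam) (SRect p) = 1
    rw [LRCoeff]
    exact stair_coeff hlam hlam0 hst
  refine ⟨⟨?_, ?_⟩, hstair⟩
  · intro hne
    obtain ⟨T, hT⟩ := Set.nonempty_of_ncard_ne_zero hne
    exact staircase_of_LR hp hlam hlam0 hlamb hsum hT
  · intro hst
    rw [hstair hst]
    omega
end
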